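/- arXiv:0707.1962 — 8 statements merged into one kernel-verified Lean document; each statement's English description precedes it below -/
import Mathlib

section
/- A subset S of a finite product X₁ × X₂ of nonempty sets is good (i.e., every complex-valued function on S decomposes as f(x₁,x₂) = u₁(x₁) + u₂(x₂) for suitable functions u₁, u₂) if and only if every finite subset of S is good. -/
/-!
Goodness of `S` says that for every `f` the linear system `u (inl x₁) + u (inr x₂) = f (x₁, x₂)`,
`(x₁, x₂) ∈ S`, in the unknown `u : X₁ ⊕ X₂ → ℂ` is solvable. Over a field, a system of linear
equations is solvable as soon as each finite subsystem is: an inconsistency is a linear relation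
among the equations, which involves only finitely many of them. Solutions are linear functionals on
`X₁ ⊕ X₂ →₀ ℂ`, and these extend from the span of the equations to the whole space.
-/

/-- S ⊆ X₁ × X₂ is good: every f : S → ℂ decomposes as u₁(x₁) + u₂(x₂). -/
def Good2 {X₁ X₂ : Type*} (S : Set (X₁ × X₂)) : Prop :=
  ∀ f : X₁ × X₂ → ℂ, ∃ (u₁ : X₁ → ℂ) (u₂ : X₂ → ℂ), ∀ p ∈ S, f p = u₁ p.1 + u₂ p.2

theorem LinearMap.exists_comp_eq_of_ker_le {K W V U : Type*} [DivisionRing K]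
    [AddCommGroup W] [Module K W] [AddCommGroup V] [Module K V] [AddCommGroup U] [Module K U]
    {A : W →ₗ[K] V} {B : W →ₗ[K] U} (h : ker A ≤ ker B) : ∃ ℓ : V →ₗ[K] U, ℓ ∘ₗ A = B := by
  obtain ⟨g, hg⟩ := ((ker A).liftQ A le_rfl).exists_leftInverse_of_injective
    ((ker A).ker_liftQ_eq_bot A le_rfl le_rfl)
  refine ⟨(ker A).liftQ B h ∘ₗ g, LinearMap.ext fun w => ?_⟩
  have hw : g (A w) = (ker A).mkQ w := LinearMap.congr_fun hg ((ker A).mkQ w)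
  simp [hw]

theorem Module.Dual.exists_of_forall_finset {K V I : Type*} [Field K] [AddCommGroup V]
    [Module K V] (φ : I → V) (b : I → K)
    (h : ∀ s : Finset I, ∃ ℓ : Module.Dual K V, ∀ i ∈ s, ℓ (φ i) = b i) :
    ∃ ℓ : Module.Dual K V, ∀ i, ℓ (φ i) = b i := by
  have hker : LinearMap.ker (Finsupp.linearCombination K φ) ≤
      LinearMap.ker (Finsupp.linearCombination K b) := by
    intro c hc
    obtain ⟨ℓ, hℓ⟩ := h c.support
    rw [LinearMap.mem_ker] at hc ⊢
    calc Finsupp.linearCombination K b c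
        = Finsupp.linearCombination K (ℓ ∘ φ) c := by
          simp only [Finsupp.linearCombination_apply]
          exact Finset.sum_congr rfl fun i hi => by simp [hℓ i hi]
      _ = 0 := by rw [← Finsupp.apply_linearCombination, hc, map_zero]
  obtain ⟨ℓ, hℓ⟩ := LinearMap.exists_comp_eq_of_ker_le hker
  exact ⟨ℓ, fun i => by simpa using LinearMap.congr_fun hℓ (Finsupp.single i 1)⟩

section Good2

variable {X₁ X₂ : Type*} {S T : Set (X₁ × X₂)}

theorem Good2.mono (hS : Good2 S) (hTS : T ⊆ S) : Good2 T := fun f =>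
  let ⟨u₁, u₂, hu⟩ := hS f
  ⟨u₁, u₂, fun p hp => hu p (hTS hp)⟩

/-- The left-hand side `u (inl x₁) + u (inr x₂)` of the equation indexed by `(x₁, x₂)`. -/
noncomputable def edgeVector (p : X₁ × X₂) : X₁ ⊕ X₂ →₀ ℂ :=
  Finsupp.single (.inl p.1) 1 + Finsupp.single (.inr p.2) 1

theorem good2_iff_exists_dual : Good2 S ↔
    ∀ f : X₁ × X₂ → ℂ, ∃ ℓ : Module.Dual ℂ (X₁ ⊕ X₂ →₀ ℂ), ∀ p ∈ S, ℓ (edgeVector p) = f p := by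
  refine forall_congr' fun f => ⟨fun ⟨u₁, u₂, hu⟩ => ?_, fun ⟨ℓ, hℓ⟩ => ?_⟩
  · refine ⟨Finsupp.linearCombination ℂ (Sum.elim u₁ u₂), fun p hp => ?_⟩
    simp [edgeVector, hu p hp]
  · refine ⟨fun x₁ => ℓ (Finsupp.single (.inl x₁) 1), fun x₂ => ℓ (Finsupp.single (.inr x₂) 1),
      fun p hp => ?_⟩
    rw [← hℓ p hp, edgeVector, map_add]

end Good2

theorem stmt_0_general {X₁ X₂ : Type*} (S : Set (X₁ × X₂)) :
    Good2 S ↔ ∀ T ⊆ S, T.Finite → Good2 T := by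
  refine ⟨fun hS T hTS _ => hS.mono hTS, fun hfin => good2_iff_exists_dual.mpr fun f => ?_⟩
  have hfinset (s : Finset S) :
      ∃ ℓ : Module.Dual ℂ (X₁ ⊕ X₂ →₀ ℂ), ∀ p ∈ s, ℓ (edgeVector p.1) = f p := by
    have hsS : Subtype.val '' (s : Set S) ⊆ S := Subtype.coe_image_subset S _
    obtain ⟨ℓ, hℓ⟩ := good2_iff_exists_dual.mp (hfin _ hsS (s.finite_toSet.image _)) f
    exact ⟨ℓ, fun p hp => hℓ p ⟨p, hp, rfl⟩⟩
  obtain ⟨ℓ, hℓ⟩ := Module.Dual.exists_of_forall_finset _ _ hfinset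
  exact ⟨ℓ, fun p hp => hℓ ⟨p, hp⟩⟩

/-- S is good iff every finite subset of S is good. -/
theorem stmt_0 {X₁ X₂ : Type*} [Nonempty X₁] [Nonempty X₂] (S : Set (X₁ × X₂)) :
    Good2 S ↔ ∀ T ⊆ S, T.Finite → Good2 T :=
  stmt_0_general S
end

section
/- If S ⊆ X₁ × ⋯ × Xₙ is a good set and y = (y₁,…,yₙ) is a point such that some coordinate yᵢ does not belong to the i-th projection Πᵢ(S), then S ∪ {y} is also a good set. -/
open scoped BigOperators

/-- S in an n-fold product is good. -/
def IsGoodD {n : ℕ} {X : Fin n → Type*} (S : Set (∀ i, X i)) : Prop :=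
  ∀ f : (∀ i, X i) → ℂ, ∃ u : ∀ i, X i → ℂ, ∀ p ∈ S, f p = ∑ i, u i (p i)

/-- adding a point with a coordinate outside the corresponding
projection of a good set S yields a good set. -/
theorem stmt_1 {n : ℕ} {X : Fin n → Type*} [∀ i, Nonempty (X i)]
    (S : Set (∀ i, X i)) (hS : IsGoodD S) (v : ∀ i, X i)
    (h : ∃ i, v i ∉ (fun p => p i) '' S) :
    IsGoodD (S ∪ {v}) := by
  classical
  intro f
  obtain ⟨i, hi⟩ := h
  obtain ⟨u, hu⟩ := hS f
  set c : ℂ := f v - ∑ j, u j (v j) with hc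
  refine ⟨Function.update u i (fun x => u i x + if x = v i then c else 0), ?_⟩
  have key : ∀ p : ∀ j, X j,
      ∑ j, Function.update u i (fun x => u i x + if x = v i then c else 0) j (p j)
        = (∑ j, u j (p j)) + if p i = v i then c else 0 := by
    intro p
    rw [← Finset.sum_add_sum_compl {i}, ← Finset.sum_add_sum_compl {i} (fun j => u j (p j))]
    have h1 : ∀ j ∈ ({i}ᶜ : Finset (Fin n)),
        Function.update u i (fun x => u i x + if x = v i then c else 0) j (p j)
          = u j (p j) := by
      intro j hj
      rw [Function.update_of_ne (by simpa using hj)]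
    rw [Finset.sum_congr rfl h1, Finset.sum_singleton, Finset.sum_singleton,
      Function.update_self]
    ring
  intro p hp
  rcases hp with hp | hp
  · have hpi : p i ≠ v i := fun he => hi ⟨p, hp, he⟩
    rw [key, if_neg hpi, add_zero]
    exact hu p hp
  · have hp' : p = v := hp
    rw [key, hp', if_pos rfl, hc]
    ring
end

section
/- A finite subset S = {v₁,…,vₘ} of X₁ × ⋯ × Xₙ is good if and only if the rows of its 0-1 incidence matrix M (rows indexed by points of S, columns indexed by the symbols occurring as coordinates of points of S, with M(i,j) = 1 iff the j-th symbol occurs as a coordinate of vᵢ in the appropriate position) are linearly independent over ℚ. -/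
/-!
The coordinate projections of `S` being disjoint, every symbol occurs in exactly one position,
so the coordinate functions `uᵢ` of a decomposition `f p = ∑ i, uᵢ (p i)` glue to a single
weight `w` on the symbols, and `∑ i, w (p i)` is the `p`-th entry of `M *ᵥ w` for the incidence
matrix `M`. Hence `S` is good iff `M *ᵥ ·` is surjective over `ℂ`, i.e. its rows are independent
over `ℂ`. As `M` is rational, this is independence over `ℚ`: a rational right inverse of `M`
stays one over `ℂ`, and a rational relation between the rows is a complex one.
-/

open scoped BigOperators

/-- S in an n-fold product (coordinates are natural-number "symbols") is good. -/
def IsGoodN {n : ℕ} (S : Set (Fin n → ℕ)) : Prop :=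
  ∀ f : (Fin n → ℕ) → ℂ, ∃ u : Fin n → ℕ → ℂ, ∀ p ∈ S, f p = ∑ i, u i (p i)

namespace Matrix

variable {m n K : Type*} [Fintype m] [Fintype n] [DecidableEq m] [Field K]

theorem linearIndependent_row_iff_mulVec_surjective {A : Matrix m n K} :
    LinearIndependent K A.row ↔ Function.Surjective A.mulVec := by
  refine ⟨fun h => ?_, fun h => ?_⟩
  · have hrange : LinearMap.range A.mulVecLin = ⊤ :=
      Submodule.eq_top_of_finrank_eq <| by
        rw [← rank, h.rank_matrix, Module.finrank_fintype_fun_eq_card]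
    exact LinearMap.range_eq_top.mp hrange
  · obtain ⟨B, hAB⟩ := mulVec_surjective_iff_exists_right_inverse.mp h
    rw [← vecMul_injective_iff]
    exact Function.LeftInverse.injective (g := (· ᵥ* B)) fun v => by
      simp [vecMul_vecMul, hAB]

theorem linearIndependent_row_map_algebraMap_iff {L : Type*} [Field L] [Algebra K L]
    {A : Matrix m n K} :
    LinearIndependent L (A.map (algebraMap K L)).row ↔ LinearIndependent K A.row := by
  refine ⟨fun h => ?_, fun h => ?_⟩
  · rw [← vecMul_injective_iff] at h ⊢
    have hcomm : (algebraMap K L ∘ ·) ∘ A.vecMul =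
        (A.map (algebraMap K L)).vecMul ∘ (algebraMap K L ∘ ·) :=
      funext fun v => funext (RingHom.map_vecMul (algebraMap K L) A v)
    refine Function.Injective.of_comp (f := (algebraMap K L ∘ ·)) ?_
    rw [hcomm]
    exact h.comp (FaithfulSMul.algebraMap_injective K L).comp_left
  · obtain ⟨B, hAB⟩ := mulVec_surjective_iff_exists_right_inverse.mp
      (linearIndependent_row_iff_mulVec_surjective.mp h)
    refine linearIndependent_row_iff_mulVec_surjective.mpr <|
      mulVec_surjective_iff_exists_right_inverse.mpr ⟨B.map (algebraMap K L), ?_⟩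
    rw [← Matrix.map_mul, hAB, Matrix.map_one _ (map_zero _) (map_one _)]

end Matrix

theorem linearIndependent_restrict_iff_of_support_subset {ι α R : Type*} [Semiring R]
    {v : ι → α → R} {s : Set α} (hv : ∀ i, Function.support (v i) ⊆ s) :
    LinearIndependent R (fun i (a : s) => v i a) ↔ LinearIndependent R v := by
  refine ⟨fun h => .of_comp (LinearMap.funLeft R R ((↑) : s → α)) h, fun h => ?_⟩
  have hext : ∀ i, Function.extend ((↑) : s → α) (fun a => v i a) 0 = v i := fun i =>
    funext fun a => by
      by_cases ha : a ∈ s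
      · exact Subtype.val_injective.extend_apply _ _ ⟨a, ha⟩
      · rw [Function.extend_apply' _ _ _ fun ⟨b, hb⟩ => ha (hb ▸ b.2), Pi.zero_apply,
          Function.notMem_support.mp fun h => ha (hv i h)]
  refine .of_comp (Function.ExtendByZero.linearMap R ((↑) : s → α)) ?_
  convert h using 1
  exact funext hext

open Finset Matrix

theorem Function.Injective.sum_comp_eq_sum_filter {ι α M : Type*} [Fintype ι] [DecidableEq α]
    [AddCommMonoid M] {p : ι → α} (hp : p.Injective) (w : α → M) {T : Finset α}
    (hT : ∀ k, p k ∈ T) : ∑ k, w (p k) = ∑ s ∈ T with ∃ k, p k = s, w s := by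
  have himage : {s ∈ T | ∃ k, p k = s} = univ.image p := by
    ext s
    simp only [mem_filter, mem_image, mem_univ, true_and]
    exact ⟨And.right, fun ⟨k, hk⟩ => ⟨hk ▸ hT k, k, hk⟩⟩
  rw [himage, sum_image fun k _ l _ h => hp h]

variable {n : ℕ}

def symbols (S : Finset (Fin n → ℕ)) : Finset ℕ := S.biUnion fun p => univ.image p

theorem apply_mem_symbols {S : Finset (Fin n → ℕ)} {p : Fin n → ℕ} (hp : p ∈ S) (k : Fin n) :
    p k ∈ symbols S :=
  mem_biUnion.mpr ⟨p, hp, mem_image_of_mem p (mem_univ k)⟩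

def incidenceMatrix (R : Type*) [Zero R] [One R] (S : Finset (Fin n → ℕ)) :
    Matrix S (symbols S) R :=
  Matrix.of fun p s => if ∃ k, (p : Fin n → ℕ) k = s then 1 else 0

theorem incidenceMatrix_mulVec_apply {R : Type*} [Semiring R] {S : Finset (Fin n → ℕ)}
    (w : ℕ → R) (p : S) (hp : (p : Fin n → ℕ).Injective) :
    (incidenceMatrix R S *ᵥ fun s => w s) p = ∑ k, w ((p : Fin n → ℕ) k) := by
  rw [hp.sum_comp_eq_sum_filter w (apply_mem_symbols p.2), sum_filter, ← sum_coe_sort]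
  simp only [incidenceMatrix, mulVec, dotProduct, of_apply, ite_mul, one_mul, zero_mul]
  -- the two sides differ only in the `Decidable (∃ k, _)` instance
  congr!

theorem incidenceMatrix_map (K L : Type*) [Field K] [Field L] [Algebra K L]
    (S : Finset (Fin n → ℕ)) :
    (incidenceMatrix K S).map (algebraMap K L) = incidenceMatrix L S := by
  ext p s
  simp [incidenceMatrix, apply_ite]

theorem linearIndependent_incidenceMatrix_row_iff (R : Type*) [Semiring R]
    (S : Finset (Fin n → ℕ)) :
    LinearIndependent R (incidenceMatrix R S).row ↔
      LinearIndependent R (fun p : S => fun s : ℕ =>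
        if ∃ k, (p : Fin n → ℕ) k = s then (1 : R) else 0) := by
  refine linearIndependent_restrict_iff_of_support_subset (s := (symbols S : Set ℕ))
    (v := fun (p : S) (s : ℕ) => if ∃ k, (p : Fin n → ℕ) k = s then (1 : R) else 0)
    fun p s hs => ?_
  obtain ⟨k, rfl⟩ : ∃ k, (p : Fin n → ℕ) k = s := by
    by_contra h
    exact hs (if_neg h)
  exact apply_mem_symbols p.2 k

variable {S : Finset (Fin n → ℕ)}

theorem index_eq_of_apply_eq
    (hdisj : ∀ i j : Fin n, i ≠ j →
      Disjoint ((fun p : Fin n → ℕ => p i) '' (S : Set (Fin n → ℕ)))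
               ((fun p : Fin n → ℕ => p j) '' (S : Set (Fin n → ℕ))))
    {p q : Fin n → ℕ} (hp : p ∈ S) (hq : q ∈ S) {k l : Fin n} (h : p k = q l) : k = l := by
  by_contra hkl
  exact Set.disjoint_left.mp (hdisj k l hkl) ⟨p, hp, rfl⟩ ⟨q, hq, h.symm⟩

theorem isGoodN_iff_exists_forall_eq_sum
    (hS : ∀ {p q}, p ∈ S → q ∈ S → ∀ {k l : Fin n}, p k = q l → k = l) :
    IsGoodN (S : Set (Fin n → ℕ)) ↔
      ∀ f : (Fin n → ℕ) → ℂ, ∃ w : ℕ → ℂ, ∀ p ∈ S, f p = ∑ k, w (p k) := by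
  refine ⟨fun h f => ?_, fun h f => ?_⟩
  · obtain ⟨u, hu⟩ := h f
    -- `hS` makes `q i = p k` with `q, p ∈ S` force `i = k`, so only one summand survives
    refine ⟨fun s => ∑ i, if ∃ q ∈ S, q i = s then u i s else 0, fun p hp => ?_⟩
    rw [hu p hp]
    refine sum_congr rfl fun k _ => ?_
    dsimp only
    rw [sum_eq_single k, if_pos ⟨p, hp, rfl⟩]
    · rintro i - hik
      rw [if_neg]
      rintro ⟨q, hq, hqi⟩
      exact hik (hS hq hp hqi)
    · simp
  · obtain ⟨w, hw⟩ := h f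
    exact ⟨fun _ => w, hw⟩

theorem isGoodN_iff_surjective_mulVec
    (hS : ∀ {p q}, p ∈ S → q ∈ S → ∀ {k l : Fin n}, p k = q l → k = l) :
    IsGoodN (S : Set (Fin n → ℕ)) ↔ Function.Surjective (incidenceMatrix ℂ S).mulVec := by
  have hinj (p : S) : (p : Fin n → ℕ).Injective := fun _ _ => hS p.2 p.2
  rw [isGoodN_iff_exists_forall_eq_sum hS]
  refine ⟨fun h g => ?_, fun h f => ?_⟩
  · obtain ⟨w, hw⟩ := h fun q => if hq : q ∈ S then g ⟨q, hq⟩ else 0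
    refine ⟨fun s => w s, funext fun p => ?_⟩
    rw [incidenceMatrix_mulVec_apply w p (hinj p), ← hw p p.2, dif_pos p.2]
  · obtain ⟨v, hv⟩ := h fun p => f p
    obtain ⟨w, rfl⟩ := Subtype.val_injective.surjective_comp_right v
    exact ⟨w, fun p hp =>
      (congrFun hv ⟨p, hp⟩).symm.trans (incidenceMatrix_mulVec_apply w ⟨p, hp⟩ (hinj _))⟩

/-- for a finite set S whose coordinate projections are pairwise
disjoint, S is good iff the rows of its 0-1 incidence matrix (points vs. symbols)
are linearly independent over ℚ. -/
theorem stmt_2 {n : ℕ} (S : Finset (Fin n → ℕ))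
    (hdisj : ∀ i j : Fin n, i ≠ j →
      Disjoint ((fun p : Fin n → ℕ => p i) '' (S : Set (Fin n → ℕ)))
               ((fun p : Fin n → ℕ => p j) '' (S : Set (Fin n → ℕ)))) :
    IsGoodN (S : Set (Fin n → ℕ)) ↔
      LinearIndependent ℚ (fun p : S => fun s : ℕ =>
        if ∃ k, (p : Fin n → ℕ) k = s then (1 : ℚ) else 0) := by
  rw [isGoodN_iff_surjective_mulVec (index_eq_of_apply_eq hdisj),
    ← linearIndependent_row_iff_mulVec_surjective, ← incidenceMatrix_map ℚ ℂ,
    linearIndependent_row_map_algebraMap_iff, linearIndependent_incidenceMatrix_row_iff]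
end

section
/- For every m ≥ 1, the (2m−1)×(2m−1) matrix N_{2m−1} over ℚ, obtained from the incidence matrix of S_{2m−1} = {y₁,…,y_{2m−1}} by deleting the columns corresponding to the symbols x₁, x₂, x₃, α_{2m−1}, α_{2m}, is invertible. -/
open scoped BigOperators

/-- Symbols: x₁,x₂,x₃,x₄ are 0,1,2,3 and αⱼ = j+3 (so all symbols are distinct naturals). -/
def α (j : ℕ) : ℕ := j + 3

/-- The points y₁, y₂, y₃, … of the paper's construction. -/
def y : ℕ → Fin 4 → ℕ := fun k =>
  if k = 1 then ![0, 1, 2, 3]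
  else if k = 2 then ![0, 1, α 1, α 2]
  else match k % 4 with
    | 1 => ![0, α (k - 1), α k, α (k + 1)]
    | 2 => ![α (k - 3), 1, α (k - 1), α k]
    | 3 => ![α k, α (k + 1), 2, α (k - 1)]
    | _ => ![α (k - 1), α k, α (k - 3), 3]

/-- u = (u₁,u₂,u₃,u₄) solves equation (1) for f on S. -/
def Solves (S : Set (Fin 4 → ℕ)) (f : (Fin 4 → ℕ) → ℂ) (u : Fin 4 → ℕ → ℂ) : Prop :=
  ∀ p ∈ S, f p = ∑ i, u i (p i)

/-- S is good: every complex function on S decomposes into coordinate functions. -/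
def IsGood (S : Set (Fin 4 → ℕ)) : Prop := ∀ f, ∃ u, Solves S f u

/-- i-th projection of S. -/
def proj (S : Set (Fin 4 → ℕ)) (i : Fin 4) : Set ℕ := (fun p => p i) '' S

/-- B is a boundary set of S: for every f and every prescription U on B,
equation (1) admits a solution agreeing with U on B, unique on the projections of S. -/
def IsBoundary (S : Set (Fin 4 → ℕ)) (B : Set ℕ) : Prop :=
  B ⊆ ⋃ i, proj S i ∧
  ∀ f : (Fin 4 → ℕ) → ℂ, ∀ U : ℕ → ℂ,
    (∃ u, Solves S f u ∧ ∀ i, ∀ a ∈ B ∩ proj S i, u i a = U a) ∧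
    ∀ u v, Solves S f u → (∀ i, ∀ a ∈ B ∩ proj S i, u i a = U a) →
      Solves S f v → (∀ i, ∀ a ∈ B ∩ proj S i, v i a = U a) →
      ∀ i, ∀ a ∈ proj S i, u i a = v i a

/-- S is full: a maximal good subset of the product of its projections. -/
def IsFull (S : Set (Fin 4 → ℕ)) : Prop :=
  IsGood S ∧ ∀ T : Set (Fin 4 → ℕ), S ⊆ T → (∀ p ∈ T, ∀ i, p i ∈ proj S i) →
    IsGood T → T = S

/-- Sₙ = {y₁,…,y_N}. -/
def Sn (N : ℕ) : Set (Fin 4 → ℕ) := y '' Set.Icc 1 N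

/-- The infinite set S = {y₁, y₂, …}. -/
def Sinf : Set (Fin 4 → ℕ) := y '' Set.Ici 1

/-- The extra point z = zₙ = (α_{4n−1}, x₂, α_{4n−3}, x₄). -/
def z (n : ℕ) : Fin 4 → ℕ := ![α (4 * n - 1), 1, α (4 * n - 3), 3]

/-- Two points of S are related iff some finite full subset of S contains both. -/
def Related (S : Set (Fin 4 → ℕ)) (p q : Fin 4 → ℕ) : Prop :=
  ∃ K, K ⊆ S ∧ K.Finite ∧ IsFull K ∧ p ∈ K ∧ q ∈ K

/-- The 4n×4n incidence matrix A_{4n}: rows y₂,…,y_{4n},zₙ; columns α₁,…,α_{4n}. -/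
def A (n : ℕ) : Matrix (Fin (4 * n)) (Fin (4 * n)) ℚ :=
  Matrix.of fun i j =>
    if ∃ k, (if (i : ℕ) = 4 * n - 1 then z n else y ((i : ℕ) + 2)) k = (j : ℕ) + 4
    then 1 else 0

/-!
A kernel vector `v` of N_t, t = 2n + 1, is a weight on the symbols: α_j gets `v j` (x₄ = α₀ gets
`v 0`) and every symbol without a column gets 0; row `k` says that the weights of the coordinates
of y_k sum to 0. Row y₁ kills the weight u₀ of x₄, and then the rows read uniformly
u_{2r} + u_{2r+1} + u_{2r+2} = 0 (row y_{2r+1}) and u_{2r−1} + u_{2r+1} + u_{2r+2} = 0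
(row y_{2r+2}). Once u_{2r} = 0, row y_{2r+1} (or y₂ if r = 0) gives u_{2r+1} + u_{2r+2} = 0, and
the difference of rows y_{2r+3} and y_{2r+4} gives u_{2r+1} = u_{2r+2}, so both vanish since
2 ≠ 0; for the last pair, row y_t alone gives u_{t−1} = 0 because α_t, α_{t+1} have no column.
-/

open Function
open scoped Matrix

lemma y_one : y 1 = ![0, 1, 2, 3] := rfl

lemma y_two : y 2 = ![0, 1, α 1, α 2] := rfl

lemma y_of_mod_four_eq_one {k : ℕ} (hk : k ≠ 1) (h : k % 4 = 1) :
    y k = ![0, α (k - 1), α k, α (k + 1)] := by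
  unfold y; rw [if_neg hk, if_neg (by omega), h]; rfl

lemma y_of_mod_four_eq_two {k : ℕ} (hk : k ≠ 2) (h : k % 4 = 2) :
    y k = ![α (k - 3), 1, α (k - 1), α k] := by
  unfold y; rw [if_neg (by omega), if_neg hk, h]; rfl

lemma y_of_mod_four_eq_three {k : ℕ} (h : k % 4 = 3) :
    y k = ![α k, α (k + 1), 2, α (k - 1)] := by
  unfold y; rw [if_neg (by omega), if_neg (by omega), h]; rfl

lemma y_of_mod_four_eq_zero {k : ℕ} (h : k % 4 = 0) :
    y k = ![α (k - 1), α k, α (k - 3), 3] := by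
  unfold y; rw [if_neg (by omega), if_neg (by omega), h]; rfl

lemma y_injective {k : ℕ} (hk : 1 ≤ k) : Injective (y k) := by
  rcases (by omega : k = 1 ∨ k = 2 ∨ (k ≠ 1 ∧ k % 4 = 1) ∨ (k ≠ 2 ∧ k % 4 = 2) ∨
      k % 4 = 3 ∨ k % 4 = 0) with rfl | rfl | ⟨hk, h⟩ | ⟨hk, h⟩ | h | h <;>
    [rw [y_one]; rw [y_two]; rw [y_of_mod_four_eq_one hk h]; rw [y_of_mod_four_eq_two hk h];
      rw [y_of_mod_four_eq_three h]; rw [y_of_mod_four_eq_zero h]] <;>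
    intro a b hab <;> fin_cases a <;> fin_cases b <;> simp [α] at hab ⊢ <;> omega

lemma ite_exists_eq_eq_sum {ι α R : Type*} [Fintype ι] [AddCommMonoidWithOne R]
    {p : ι → α} (hp : Injective p) (a : α) [Decidable (∃ i, p i = a)] [DecidableEq α] :
    (if ∃ i, p i = a then (1 : R) else 0) = ∑ i, if p i = a then 1 else 0 := by
  split_ifs with h
  · obtain ⟨i, rfl⟩ := h
    rw [Finset.sum_eq_single i (fun j _ hj => if_neg (hp.ne hj)) (by simp), if_pos rfl]
  · exact (Finset.sum_eq_zero fun i _ => if_neg (not_exists.mp h i)).symm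

section

variable {R : Type*} [NonAssocSemiring R]

def symbolWeight {t : ℕ} (v : Fin t → R) (s : ℕ) : R :=
  ∑ j : Fin t, if s = α j then v j else 0

lemma symbolWeight_α {t : ℕ} (v : Fin t → R) (j : Fin t) : symbolWeight v (α j) = v j := by
  simp [symbolWeight, α, Fin.val_inj]

lemma symbolWeight_α_of_le {t : ℕ} (v : Fin t → R) {j : ℕ} (hj : t ≤ j) :
    symbolWeight v (α j) = 0 :=
  Finset.sum_eq_zero fun i _ => if_neg (by simp only [α]; omega)

lemma symbolWeight_of_lt_three {t : ℕ} (v : Fin t → R) {s : ℕ} (hs : s < 3) :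
    symbolWeight v s = 0 :=
  Finset.sum_eq_zero fun i _ => if_neg (by simp only [α]; omega)

-- Column `j` carries the symbol `α j = j + 3`: column 0 is x₄ and the other columns are
-- α₁, α₂, …; `incidenceN ℚ (2 * m - 1)` is the paper's N_{2m−1}.
variable (R) in
def incidenceN (t : ℕ) : Matrix (Fin t) (Fin t) R :=
  Matrix.of fun i j => if ∃ k, y (i + 1) k = α j then 1 else 0

lemma incidenceN_mulVec_apply {t : ℕ} (v : Fin t → R) (i : Fin t) :
    (incidenceN R t *ᵥ v) i = ∑ c, symbolWeight v (y (i + 1) c) := by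
  simp only [Matrix.mulVec, dotProduct, incidenceN, Matrix.of_apply,
    ite_exists_eq_eq_sum (y_injective (Nat.le_add_left 1 i)), Finset.sum_mul, symbolWeight,
    ite_mul, one_mul, zero_mul]
  exact Finset.sum_comm

end

lemma sum_y_odd {M : Type*} [AddCommMonoid M] (g : ℕ → M) (hg : ∀ s < 3, g s = 0) {r : ℕ}
    (hr : 1 ≤ r) :
    ∑ c, g (y (2 * r + 1) c) = g (α (2 * r)) + g (α (2 * r + 1)) + g (α (2 * r + 2)) := by
  rcases Nat.even_or_odd r with hr' | hr'
  · rw [y_of_mod_four_eq_one (by omega) (by rcases hr' with ⟨n, rfl⟩; omega)]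
    simp [Fin.sum_univ_four, hg 0 (by norm_num), add_assoc]
  · rw [y_of_mod_four_eq_three (by rcases hr' with ⟨n, rfl⟩; omega)]
    simp only [Fin.sum_univ_four, Matrix.cons_val, hg 2 (by norm_num), add_zero,
      Nat.add_sub_cancel]
    abel

lemma sum_y_even {M : Type*} [AddCommMonoid M] (g : ℕ → M) (hg : ∀ s ≤ 3, g s = 0) (r : ℕ) :
    ∑ c, g (y (2 * r + 4) c) = g (α (2 * r + 1)) + g (α (2 * r + 3)) + g (α (2 * r + 4)) := by
  rcases Nat.even_or_odd r with hr' | hr'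
  · rw [y_of_mod_four_eq_zero (by rcases hr' with ⟨n, rfl⟩; omega)]
    simp only [Fin.sum_univ_four, Matrix.cons_val, hg 3 le_rfl, add_zero, Nat.reduceSubDiff]
    abel
  · rw [y_of_mod_four_eq_two (by omega) (by rcases hr' with ⟨n, rfl⟩; omega)]
    simp [Fin.sum_univ_four, hg 1 (by norm_num)]

lemma eq_zero_of_incidence_relations {K : Type*} [Field K] [NeZero (2 : K)] {u : ℕ → K} {n : ℕ}
    (hu0 : u 0 = 0) (htop : ∀ j, 2 * n + 1 ≤ j → u j = 0) (hu12 : 1 ≤ n → u 1 + u 2 = 0)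
    (hodd : ∀ r, 1 ≤ r → r ≤ n → u (2 * r) + u (2 * r + 1) + u (2 * r + 2) = 0)
    (heven : ∀ r, r + 2 ≤ n → u (2 * r + 1) + u (2 * r + 3) + u (2 * r + 4) = 0) :
    u = 0 := by
  have step : ∀ r, u (2 * r) = 0 → u (2 * r + 1) = 0 ∧ u (2 * r + 2) = 0 := by
    intro r hr
    rcases le_or_gt n r with hnr | hrn
    · exact ⟨htop _ (by omega), htop _ (by omega)⟩
    have hsum : u (2 * r + 1) + u (2 * r + 2) = 0 := by
      rcases Nat.eq_zero_or_pos r with rfl | hr0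
      · exact hu12 hrn
      · linear_combination hodd r hr0 hrn.le - hr
    have heq : u (2 * r + 1) = u (2 * r + 2) := by
      have h : u (2 * r + 2) + u (2 * r + 3) + u (2 * r + 4) = 0 :=
        hodd (r + 1) (by omega) (by omega)
      rcases (by omega : r + 2 ≤ n ∨ r + 1 = n) with hr2 | rfl
      · linear_combination heven r hr2 - h
      · rw [htop (2 * r + 3) (by omega), htop (2 * r + 4) (by omega)] at h
        linear_combination hsum - 2 * h
    have h2 : (2 : K) * u (2 * r + 1) = 0 := by linear_combination hsum + heq
    have h1 := (mul_eq_zero.mp h2).resolve_left two_ne_zero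
    exact ⟨h1, heq ▸ h1⟩
  have heven_zero : ∀ r, u (2 * r) = 0 := fun r => Nat.rec hu0 (fun r ih => (step r ih).2) r
  funext j
  obtain ⟨r, rfl | rfl⟩ := Nat.even_or_odd' j
  exacts [heven_zero r, (step r (heven_zero r)).1]

theorem incidenceN_isUnit {K : Type*} [Field K] [NeZero (2 : K)] {t : ℕ} (ht : Odd t) :
    IsUnit (incidenceN K t) := by
  obtain ⟨n, rfl⟩ := ht
  rw [← Matrix.mulVec_injective_iff_isUnit, ← Matrix.coe_mulVecLin, ← LinearMap.ker_eq_bot,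
    Matrix.ker_mulVecLin_eq_bot_iff]
  intro v hv
  set w := symbolWeight v
  have hrow : ∀ k, 1 ≤ k → k ≤ 2 * n + 1 → ∑ c, w (y k c) = 0 := by
    intro k hk1 hk2
    obtain ⟨i, rfl⟩ : ∃ i, k = i + 1 := ⟨k - 1, by omega⟩
    rw [← incidenceN_mulVec_apply v ⟨i, by omega⟩, hv, Pi.zero_apply]
  have hw_lt : ∀ s < 3, w s = 0 := fun s hs => symbolWeight_of_lt_three v hs
  have hx₄ : w 3 = 0 := by
    simpa [y_one, Fin.sum_univ_four, hw_lt] using hrow 1 le_rfl (by omega)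
  have hw_le : ∀ s ≤ 3, w s = 0 := fun s hs =>
    (Nat.lt_or_eq_of_le hs).elim (hw_lt s) fun h => h ▸ hx₄
  have hu : (fun j => w (α j)) = 0 := by
    refine eq_zero_of_incidence_relations (n := n) hx₄ (fun j hj => symbolWeight_α_of_le v hj)
      (fun hn => ?_) (fun r hr1 hrn => ?_) (fun r hr => ?_)
    · simpa [y_two, Fin.sum_univ_four, hw_lt] using hrow 2 le_add_self (by omega)
    · exact sum_y_odd w hw_lt hr1 ▸ hrow _ (by omega) (by omega)
    · exact sum_y_even w hw_le r ▸ hrow _ (by omega) (by omega)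
  funext j
  rw [← symbolWeight_α v j]
  exact congrFun hu j

/-- the (2m−1)×(2m−1) matrix N_{2m−1}, obtained from the incidence
matrix of S_{2m−1} by deleting the columns of x₁,x₂,x₃,α_{2m−1},α_{2m}
(remaining columns: x₄ = 3 and α₁,…,α_{2m−2}, i.e. symbol j+3 for column j),
is invertible over ℚ. -/
theorem stmt_4 (m : ℕ) (hm : 1 ≤ m) :
    IsUnit (Matrix.of fun i j : Fin (2 * m - 1) =>
      if ∃ k, y ((i : ℕ) + 1) k = (j : ℕ) + 3 then (1 : ℚ) else 0) :=
  incidenceN_isUnit ⟨m - 1, by omega⟩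
end

section
/- For every m ≥ 1, the set {x₁, x₂, x₃, α_{2m−1}} is also a boundary of the good set S_{2m} = {y₁,…,y_{2m}}. -/
open scoped BigOperators

/-!
Each `αⱼ` occurs in only one coordinate of the points, and for `k ≥ 3` the point `y_k` has exactly
one `x`-symbol. Prescribing the values at `x₁, x₂, x₃` (the value at `x₄` is then read off `y₁`)
turns equation (1) on `S_{2m}` into a linear system for `aⱼ = u(αⱼ)`, `1 ≤ j ≤ 2m`, with known
right-hand sides `g_k`. With `p_t = a_{2t+1} + a_{2t+2}`, row `y₂` reads `p₀ = g₂`, and rows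
`y_{2t+3}`, `y_{2t+4}` read `a_{2t+2} + p_{t+1} = g_{2t+3}` and `a_{2t+1} + p_{t+1} = g_{2t+4}`.
Adding the last two gives `p_{t+1} = (g_{2t+3} + g_{2t+4} - p_t) / 2`, so every `p_t`, and with
it every `aⱼ` with `j ≤ 2m - 2`, is forced; of the last pair only the sum `p_{m-1}` is, and
prescribing `a_{2m-1}` fixes the split.
-/

section Chain

variable {K : Type*} [Field K] {m t j : ℕ} {g a : ℕ → K} {c : K}

-- Rows `y₂, …, y_{2m}` of (1) in the unknowns `a j = u (slot j) (α j)`.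
def ChainEqs (m : ℕ) (g a : ℕ → K) : Prop :=
  a 1 + a 2 = g 2 ∧ ∀ t, t + 1 < m →
    a (2 * t + 2) + (a (2 * t + 3) + a (2 * t + 4)) = g (2 * t + 3) ∧
    a (2 * t + 1) + (a (2 * t + 3) + a (2 * t + 4)) = g (2 * t + 4)

def pairSum (g : ℕ → K) : ℕ → K
  | 0 => g 2
  | t + 1 => (g (2 * t + 3) + g (2 * t + 4) - pairSum g t) / 2

def chainSol (m : ℕ) (g : ℕ → K) (c : K) (j : ℕ) : K :=
  if j = 2 * m - 1 then c
  else if j = 2 * m then pairSum g (m - 1) - c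
  else if j % 2 = 1 then g (j + 3) - pairSum g ((j + 1) / 2)
  else g (j + 1) - pairSum g (j / 2)

theorem chainSol_two_mul_add_one (h : t + 1 < m) :
    chainSol m g c (2 * t + 1) = g (2 * t + 4) - pairSum g (t + 1) := by
  rw [chainSol, if_neg (by omega), if_neg (by omega), if_pos (by omega),
    show (2 * t + 1 + 1) / 2 = t + 1 by omega]

theorem chainSol_two_mul_add_two (h : t + 1 < m) :
    chainSol m g c (2 * t + 2) = g (2 * t + 3) - pairSum g (t + 1) := by
  rw [chainSol, if_neg (by omega), if_neg (by omega), if_neg (by omega),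
    show (2 * t + 2) / 2 = t + 1 by omega]

theorem chainSol_two_mul_sub_one : chainSol m g c (2 * m - 1) = c := if_pos rfl

theorem chainSol_two_mul (hm : 1 ≤ m) : chainSol m g c (2 * m) = pairSum g (m - 1) - c := by
  rw [chainSol, if_neg (by omega), if_pos rfl]

variable [NeZero (2 : K)]

theorem chainSol_pair (h : t < m) :
    chainSol m g c (2 * t + 1) + chainSol m g c (2 * t + 2) = pairSum g t := by
  rcases (show t + 1 < m ∨ t + 1 = m by omega) with ht | rfl
  · rw [chainSol_two_mul_add_one ht, chainSol_two_mul_add_two ht, pairSum]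
    field_simp
    ring
  · rw [show 2 * t + 1 = 2 * (t + 1) - 1 by omega, chainSol_two_mul_sub_one,
      show 2 * t + 2 = 2 * (t + 1) by omega, chainSol_two_mul (by omega)]
    simp

theorem chainEqs_chainSol (hm : 1 ≤ m) : ChainEqs m g (chainSol m g c) := by
  refine ⟨chainSol_pair (t := 0) hm, fun t ht => ?_⟩
  have hpair : chainSol m g c (2 * t + 3) + chainSol m g c (2 * t + 4) = pairSum g (t + 1) :=
    chainSol_pair ht
  rw [hpair, chainSol_two_mul_add_one ht, chainSol_two_mul_add_two ht]
  constructor <;> ring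

theorem ChainEqs.pair_eq_pairSum (h : ChainEqs m g a) :
    ∀ t < m, a (2 * t + 1) + a (2 * t + 2) = pairSum g t
  | 0, _ => h.1
  | t + 1, ht => by
    obtain ⟨hodd, heven⟩ := h.2 t ht
    have hprev := h.pair_eq_pairSum t (by omega)
    rw [pairSum, eq_div_iff two_ne_zero]
    linear_combination hodd + heven - hprev

theorem ChainEqs.eq_chainSol (h : ChainEqs m g a) (hj : j ∈ Set.Icc 1 (2 * m)) :
    a j = chainSol m g (a (2 * m - 1)) j := by
  obtain ⟨hj1, hj2⟩ := hj
  obtain ⟨t, rfl | rfl⟩ : ∃ t, j = 2 * t + 1 ∨ j = 2 * t + 2 := ⟨(j - 1) / 2, by omega⟩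
  all_goals rcases (show t + 1 < m ∨ t + 1 = m by omega) with ht | rfl
  · rw [chainSol_two_mul_add_one ht, ← h.pair_eq_pairSum (t + 1) ht]
    linear_combination (h.2 t ht).2
  · rw [show 2 * t + 1 = 2 * (t + 1) - 1 by omega, chainSol_two_mul_sub_one]
  · rw [chainSol_two_mul_add_two ht, ← h.pair_eq_pairSum (t + 1) ht]
    linear_combination (h.2 t ht).1
  · rw [show 2 * t + 2 = 2 * (t + 1) by omega, chainSol_two_mul (by omega),
      Nat.add_sub_cancel, ← h.pair_eq_pairSum t (by omega),
      show 2 * (t + 1) - 1 = 2 * t + 1 by omega]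
    ring_nf

end Chain

theorem y_four_mul_add_three (n : ℕ) :
    y (4 * n + 3) = ![α (4 * n + 3), α (4 * n + 4), 2, α (4 * n + 2)] := by
  rw [y, if_neg (by omega), if_neg (by omega), show (4 * n + 3) % 4 = 3 by omega]
  rfl

theorem y_four_mul_add_four (n : ℕ) :
    y (4 * n + 4) = ![α (4 * n + 3), α (4 * n + 4), α (4 * n + 1), 3] := by
  rw [y, if_neg (by omega), if_neg (by omega), show (4 * n + 4) % 4 = 0 by omega]
  rfl

theorem y_four_mul_add_five (n : ℕ) :
    y (4 * n + 5) = ![0, α (4 * n + 4), α (4 * n + 5), α (4 * n + 6)] := by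
  rw [y, if_neg (by omega), if_neg (by omega), show (4 * n + 5) % 4 = 1 by omega]
  rfl

theorem y_four_mul_add_six (n : ℕ) :
    y (4 * n + 6) = ![α (4 * n + 3), 1, α (4 * n + 5), α (4 * n + 6)] := by
  rw [y, if_neg (by omega), if_neg (by omega), show (4 * n + 6) % 4 = 2 by omega]
  rfl

-- `α j` occurs only in coordinate `slot j`; for `k ≥ 3` the one `x`-symbol of `y k` sits in
-- coordinate `xSlot k`.
def slot (j : ℕ) : Fin 4 := ⟨(j + 1) % 4, by omega⟩

def xSlot (k : ℕ) : Fin 4 := ⟨(k + 3) % 4, by omega⟩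

theorem slot_four_mul_add (n j : ℕ) : slot (4 * n + j) = slot j := by
  ext
  simp only [slot]
  omega

theorem xSlot_four_mul_add (n k : ℕ) : xSlot (4 * n + k) = xSlot k := by
  ext
  simp only [xSlot]
  omega

theorem y_one_apply (i : Fin 4) : y 1 i = i := by
  fin_cases i <;> rfl

section RowSums

variable {M : Type*} [AddCommMonoid M] (u : Fin 4 → ℕ → M)

def diag : Fin 4 → M := fun i => u i i

theorem sum_y_one : ∑ i, u i (y 1 i) = ∑ i, diag u i := by
  simp only [y_one_apply, diag]

theorem sum_y_two :
    ∑ i, u i (y 2 i) = diag u 0 + diag u 1 + u (slot 1) (α 1) + u (slot 2) (α 2) := by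
  simp only [Fin.sum_univ_four]
  rfl

theorem sum_y_two_mul_add_three (t : ℕ) :
    ∑ i, u i (y (2 * t + 3) i) = diag u (xSlot (2 * t + 3)) +
      u (slot (2 * t + 2)) (α (2 * t + 2)) + u (slot (2 * t + 3)) (α (2 * t + 3)) +
      u (slot (2 * t + 4)) (α (2 * t + 4)) := by
  obtain ⟨n, rfl | rfl⟩ : ∃ n, t = 2 * n ∨ t = 2 * n + 1 := ⟨t / 2, by omega⟩
  · rw [show 2 * (2 * n) = 4 * n by ring]
    simp only [y_four_mul_add_three, Fin.sum_univ_four, slot_four_mul_add, xSlot_four_mul_add]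
    abel!
  · rw [show 2 * (2 * n + 1) = 4 * n + 2 by ring]
    simp only [Nat.add_assoc, Nat.reduceAdd, y_four_mul_add_five, Fin.sum_univ_four,
      slot_four_mul_add, xSlot_four_mul_add]
    abel!

theorem sum_y_two_mul_add_four (t : ℕ) :
    ∑ i, u i (y (2 * t + 4) i) = diag u (xSlot (2 * t + 4)) +
      u (slot (2 * t + 1)) (α (2 * t + 1)) + u (slot (2 * t + 3)) (α (2 * t + 3)) +
      u (slot (2 * t + 4)) (α (2 * t + 4)) := by
  obtain ⟨n, rfl | rfl⟩ : ∃ n, t = 2 * n ∨ t = 2 * n + 1 := ⟨t / 2, by omega⟩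
  · rw [show 2 * (2 * n) = 4 * n by ring]
    simp only [y_four_mul_add_four, Fin.sum_univ_four, slot_four_mul_add, xSlot_four_mul_add]
    abel!
  · rw [show 2 * (2 * n + 1) = 4 * n + 2 by ring]
    simp only [Nat.add_assoc, Nat.reduceAdd, y_four_mul_add_six, Fin.sum_univ_four,
      slot_four_mul_add, xSlot_four_mul_add]
    abel!

end RowSums

theorem y_succ_slot {j : ℕ} (hj : 1 ≤ j) : y (j + 1) (slot j) = α j := by
  obtain rfl | ⟨n, rfl | rfl | rfl | rfl⟩ :
      j = 1 ∨ ∃ n, j = 4 * n + 2 ∨ j = 4 * n + 3 ∨ j = 4 * n + 4 ∨ j = 4 * n + 5 := by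
    rcases Nat.lt_or_ge j 2 with h | h
    · exact Or.inl (by omega)
    · exact Or.inr ⟨(j - 2) / 4, by omega⟩
  · rfl
  all_goals simp [y_four_mul_add_three, y_four_mul_add_four, y_four_mul_add_five,
    y_four_mul_add_six, slot, Nat.add_assoc]

theorem mem_proj_Sn {N k : ℕ} (hk : k ∈ Set.Icc 1 N) (i : Fin 4) : y k i ∈ proj (Sn N) i :=
  ⟨y k, ⟨k, hk, rfl⟩, rfl⟩

theorem eq_or_eq_α_of_mem_proj {m : ℕ} {i : Fin 4} {a : ℕ} (ha : a ∈ proj (Sn (2 * m)) i) :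
    a = i ∨ ∃ j ∈ Set.Icc 1 (2 * m), slot j = i ∧ a = α j := by
  obtain ⟨_, ⟨k, ⟨hk1, hk2⟩, rfl⟩, rfl⟩ := ha
  obtain rfl | rfl | ⟨n, rfl | rfl | rfl | rfl⟩ : k = 1 ∨ k = 2 ∨
      ∃ n, k = 4 * n + 3 ∨ k = 4 * n + 4 ∨ k = 4 * n + 5 ∨ k = 4 * n + 6 := by
    rcases Nat.lt_or_ge k 3 with h | h
    · omega
    · exact Or.inr (Or.inr ⟨(k - 3) / 4, by omega⟩)
  all_goals
    simp only [y_four_mul_add_three, y_four_mul_add_four, y_four_mul_add_five,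
      y_four_mul_add_six]
    fin_cases i
  all_goals
    first
    | exact Or.inl rfl
    | exact Or.inr ⟨_, ⟨by omega, by omega⟩, by simp [slot, Nat.add_assoc], rfl⟩

noncomputable def chainRhs (f : (Fin 4 → ℕ) → ℂ) (d : Fin 4 → ℂ) (k : ℕ) : ℂ :=
  if k = 2 then f (y 2) - d 0 - d 1 else f (y k) - d (xSlot k)

def liftSol {M : Type*} (d : Fin 4 → M) (a : ℕ → M) : Fin 4 → ℕ → M :=
  fun _ x => if hx : x < 4 then d ⟨x, hx⟩ else a (x - 3)

section Solutions

variable {m : ℕ} {f : (Fin 4 → ℕ) → ℂ} {u v : Fin 4 → ℕ → ℂ}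

theorem solves_Sn_iff {N : ℕ} :
    Solves (Sn N) f u ↔ ∀ k ∈ Set.Icc 1 N, f (y k) = ∑ i, u i (y k i) :=
  Set.forall_mem_image

theorem chainEqs_of_solves (hm : 1 ≤ m) (hu : Solves (Sn (2 * m)) f u) :
    f (y 1) = ∑ i, diag u i ∧ ChainEqs m (chainRhs f (diag u)) fun j => u (slot j) (α j) := by
  rw [solves_Sn_iff] at hu
  refine ⟨(hu 1 ⟨le_rfl, by omega⟩).trans (sum_y_one u), ?_, fun t ht => ⟨?_, ?_⟩⟩
  · have h := hu 2 ⟨by omega, by omega⟩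
    rw [sum_y_two] at h
    rw [chainRhs, if_pos rfl]
    linear_combination -h
  · have h := hu (2 * t + 3) ⟨by omega, by omega⟩
    rw [sum_y_two_mul_add_three] at h
    rw [chainRhs, if_neg (by omega)]
    linear_combination -h
  · have h := hu (2 * t + 4) ⟨by omega, by omega⟩
    rw [sum_y_two_mul_add_four] at h
    rw [chainRhs, if_neg (by omega)]
    linear_combination -h

theorem solves_of_chainEqs {d : Fin 4 → ℂ} {a : ℕ → ℂ} (hd : diag u = d)
    (ha : ∀ j, 1 ≤ j → u (slot j) (α j) = a j) (h1 : f (y 1) = ∑ i, d i)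
    (h : ChainEqs m (chainRhs f d) a) : Solves (Sn (2 * m)) f u := by
  rw [solves_Sn_iff]
  rintro k ⟨hk1, hk2⟩
  obtain rfl | rfl | ⟨t, rfl | rfl⟩ :
      k = 1 ∨ k = 2 ∨ ∃ t, k = 2 * t + 3 ∨ k = 2 * t + 4 := by
    rcases Nat.lt_or_ge k 3 with hk | hk
    · omega
    · exact Or.inr (Or.inr ⟨(k - 3) / 2, by omega⟩)
  · rw [sum_y_one, hd, h1]
  · have h2 := h.1
    rw [chainRhs, if_pos rfl] at h2
    rw [sum_y_two, hd, ha 1 le_rfl, ha 2 (by norm_num)]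
    linear_combination -h2
  · have h3 := (h.2 t (by omega)).1
    rw [chainRhs, if_neg (by omega)] at h3
    rw [sum_y_two_mul_add_three, hd, ha _ (by omega), ha _ (by omega), ha _ (by omega)]
    linear_combination -h3
  · have h4 := (h.2 t (by omega)).2
    rw [chainRhs, if_neg (by omega)] at h4
    rw [sum_y_two_mul_add_four, hd, ha _ (by omega), ha _ (by omega), ha _ (by omega)]
    linear_combination -h4

theorem exists_solves_eq_on_boundary (hm : 1 ≤ m) (f : (Fin 4 → ℕ) → ℂ) (U : ℕ → ℂ) :
    ∃ u, Solves (Sn (2 * m)) f u ∧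
      ∀ i, ∀ b ∈ ({0, 1, 2, α (2 * m - 1)} : Set ℕ), u i b = U b := by
  let d : Fin 4 → ℂ := ![U 0, U 1, U 2, f (y 1) - U 0 - U 1 - U 2]
  let a := chainSol m (chainRhs f d) (U (α (2 * m - 1)))
  have hd : diag (liftSol d a) = d := funext fun i => dif_pos i.isLt
  have ha (i : Fin 4) (j : ℕ) (hj : 1 ≤ j) : liftSol d a i (α j) = a j := by
    rw [liftSol, dif_neg (by simp only [α]; omega), α, Nat.add_sub_cancel]
  refine ⟨liftSol d a, solves_of_chainEqs hd (fun j => ha _ j) ?_ (chainEqs_chainSol hm), ?_⟩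
  · simp [d, Fin.sum_univ_four]
  · rintro i b (rfl | rfl | rfl | rfl)
    · rfl
    · rfl
    · rfl
    · exact (ha i _ (by omega)).trans chainSol_two_mul_sub_one

theorem eqOn_proj_of_solves (hm : 1 ≤ m) (hu : Solves (Sn (2 * m)) f u)
    (hv : Solves (Sn (2 * m)) f v) (h0 : diag u 0 = diag v 0)
    (h1 : diag u 1 = diag v 1) (h2 : diag u 2 = diag v 2)
    (hα : u (slot (2 * m - 1)) (α (2 * m - 1)) = v (slot (2 * m - 1)) (α (2 * m - 1))) :
    ∀ i, ∀ a ∈ proj (Sn (2 * m)) i, u i a = v i a := by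
  obtain ⟨hu1, hu⟩ := chainEqs_of_solves hm hu
  obtain ⟨hv1, hv⟩ := chainEqs_of_solves hm hv
  have hd : diag u = diag v := by
    have h3 : diag u 3 = diag v 3 := by
      rw [hu1, Fin.sum_univ_four, Fin.sum_univ_four] at hv1
      linear_combination hv1 - h0 - h1 - h2
    funext i
    fin_cases i
    exacts [h0, h1, h2, h3]
  rw [hd] at hu
  intro i a ha
  rcases eq_or_eq_α_of_mem_proj ha with rfl | ⟨j, hj, rfl, rfl⟩
  · exact congrFun hd i
  · rw [hu.eq_chainSol hj, hv.eq_chainSol hj, hα]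

end Solutions

/-- {x₁,x₂,x₃,α_{2m−1}} is also a boundary of the good set S_{2m}. -/
theorem stmt_6 (m : ℕ) (hm : 1 ≤ m) :
    IsGood (Sn (2 * m)) ∧ IsBoundary (Sn (2 * m)) {0, 1, 2, α (2 * m - 1)} := by
  have hx (i : Fin 4) : (i : ℕ) ∈ proj (Sn (2 * m)) i :=
    y_one_apply i ▸ mem_proj_Sn ⟨le_rfl, by omega⟩ i
  have hα : α (2 * m - 1) ∈ proj (Sn (2 * m)) (slot (2 * m - 1)) := by
    rw [← y_succ_slot (by omega)]
    exact mem_proj_Sn ⟨by omega, by omega⟩ _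
  refine ⟨fun f => (exists_solves_eq_on_boundary hm f 0).imp fun _ h => h.1, ?_,
    fun f U => ⟨?_, ?_⟩⟩
  · rintro b (rfl | rfl | rfl | rfl)
    exacts [Set.mem_iUnion_of_mem 0 (hx 0), Set.mem_iUnion_of_mem 1 (hx 1),
      Set.mem_iUnion_of_mem 2 (hx 2), Set.mem_iUnion_of_mem _ hα]
  · obtain ⟨u, hu, hub⟩ := exists_solves_eq_on_boundary hm f U
    exact ⟨u, hu, fun i b hb => hub i b hb.1⟩
  · intro u v hu hbu hv hbv
    have agree : ∀ i, ∀ b ∈ ({0, 1, 2, α (2 * m - 1)} : Set ℕ) ∩ proj (Sn (2 * m)) i,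
        u i b = v i b := fun i b hb => (hbu i b hb).trans (hbv i b hb).symm
    exact eqOn_proj_of_solves hm hu hv (agree 0 0 ⟨by simp, hx 0⟩) (agree 1 1 ⟨by simp, hx 1⟩)
      (agree 2 2 ⟨by simp, hx 2⟩) (agree _ _ ⟨by simp, hα⟩)
end

section
/- The infinite set S = {y₁, y₂, y₃, …} is good: every function f : S → ℂ admits a decomposition f = u₁ + u₂ + u₃ + u₄ into functions of the individual coordinates. -/
open scoped BigOperators

/-!
All symbols are distinct and each one occurs in only one coordinate, so a single function
`coord : ℕ → ℂ` can serve as all four `uᵢ`; it vanishes at x₁, x₂, x₃ and takes the value `f y₁`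
at x₄. Group the symbols into blocks α_{4n+1}, …, α_{4n+4}. Once the value at α_{4n} is known,
the equations of y_{4n+1} and y_{4n+4} − y_{4n+3} give the sum and the difference of the values
at α_{4n+1}, α_{4n+2}; the equations of y_{4n+3} and y_{4n+5} − y_{4n+6} (the latter from the next
block) give those at α_{4n+3}, α_{4n+4}. Solving block after block satisfies every equation.
-/

namespace Sinf

variable (f : (Fin 4 → ℕ) → ℂ)

def blockSymbol (n : ℕ) (r : Fin 4) : ℕ := α (4 * n + r + 1)

lemma y_one : y 1 = ![0, 1, 2, 3] := by
  simp [y]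

lemma y_two : y 2 = ![0, 1, blockSymbol 0 0, blockSymbol 0 1] := by
  simp [y, blockSymbol]

lemma y_four_mul_add_three (n : ℕ) :
    y (4 * n + 3) = ![blockSymbol n 2, blockSymbol n 3, 2, blockSymbol n 1] := by
  have hmod : (4 * n + 3) % 4 = 3 := by omega
  simp only [y, hmod, blockSymbol, α]
  rw [if_neg (by omega), if_neg (by omega)]
  ext i; fin_cases i <;> simp

lemma y_four_mul_add_four (n : ℕ) :
    y (4 * n + 4) = ![blockSymbol n 2, blockSymbol n 3, blockSymbol n 0, 3] := by
  have hmod : (4 * n + 4) % 4 = 0 := by omega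
  simp only [y, hmod, blockSymbol, α]
  rw [if_neg (by omega), if_neg (by omega)]
  ext i; fin_cases i <;> simp

lemma y_four_mul_add_five (n : ℕ) :
    y (4 * n + 5) = ![0, blockSymbol n 3, blockSymbol (n + 1) 0, blockSymbol (n + 1) 1] := by
  have hmod : (4 * n + 5) % 4 = 1 := by omega
  simp only [y, hmod, blockSymbol, α]
  rw [if_neg (by omega), if_neg (by omega)]
  ext i; fin_cases i <;> simp <;> omega

lemma y_four_mul_add_six (n : ℕ) :
    y (4 * n + 6) = ![blockSymbol n 2, 1, blockSymbol (n + 1) 0, blockSymbol (n + 1) 1] := by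
  have hmod : (4 * n + 6) % 4 = 2 := by omega
  simp only [y, hmod, blockSymbol, α]
  rw [if_neg (by omega), if_neg (by omega)]
  ext i; fin_cases i <;> simp <;> omega

/-- The values at the symbols of block `n`, given the value `a₀` at α_{4n}. -/
noncomputable def block (a₀ : ℂ) (n : ℕ) : Fin 4 → ℂ :=
  let P := f (y (4 * n + 1)) - a₀
  let D := f (y (4 * n + 4)) - f (y (4 * n + 3)) - f (y 1)
  let Q := f (y (4 * n + 3)) - (P - D) / 2
  let E := f (y (4 * n + 5)) - f (y (4 * n + 6))
  ![(P + D) / 2, (P - D) / 2, (Q - E) / 2, (Q + E) / 2]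

section block

variable (a₀ : ℂ) (n : ℕ)

lemma block_zero_add_block_one :
    block f a₀ n 0 + block f a₀ n 1 = f (y (4 * n + 1)) - a₀ := by
  simp only [block, Matrix.cons_val]; ring

lemma block_zero_sub_block_one :
    block f a₀ n 0 - block f a₀ n 1 = f (y (4 * n + 4)) - f (y (4 * n + 3)) - f (y 1) := by
  simp only [block, Matrix.cons_val]; ring

lemma block_two_add_block_three :
    block f a₀ n 2 + block f a₀ n 3 = f (y (4 * n + 3)) - block f a₀ n 1 := by
  simp only [block, Matrix.cons_val]; ring

lemma block_three_sub_block_two :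
    block f a₀ n 3 - block f a₀ n 2 = f (y (4 * n + 5)) - f (y (4 * n + 6)) := by
  simp only [block, Matrix.cons_val]; ring

end block

/-- The value at α_{4n}. There is no symbol α₀: its value is chosen so that the equation of y₂
becomes the `n = 0` instance of the equation of y_{4n+1}. -/
noncomputable def seed : ℕ → ℂ
  | 0 => f (y 1) - f (y 2)
  | n + 1 => block f (seed n) n 3

noncomputable def coord : ℕ → ℂ
  | 0 | 1 | 2 => 0
  | 3 => f (y 1)
  | m + 4 => block f (seed f (m / 4)) (m / 4) (Fin.ofNat 4 m)

lemma coord_blockSymbol (n : ℕ) (r : Fin 4) :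
    coord f (blockSymbol n r) = block f (seed f n) n r := by
  have hsymbol : blockSymbol n r = (4 * n + r) + 4 := rfl
  have hr : Fin.ofNat 4 (4 * n + r) = r := by ext; simp only [Fin.val_ofNat]; omega
  rw [hsymbol, coord, hr, show (4 * n + r) / 4 = n by omega]

lemma sum_coord_vecCons (a b c d : ℕ) :
    ∑ i, coord f (![a, b, c, d] i) = coord f a + coord f b + coord f c + coord f d :=
  Fin.sum_univ_four _

lemma eq_sum_coord {k : ℕ} (hk : 1 ≤ k) : f (y k) = ∑ i, coord f (y k i) := by
  obtain rfl | rfl | ⟨n, rfl | rfl | rfl | rfl⟩ :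
      k = 1 ∨ k = 2 ∨ ∃ n, k = 4 * n + 3 ∨ k = 4 * n + 4 ∨ k = 4 * n + 5 ∨ k = 4 * n + 6 := by
    rcases Nat.lt_or_ge k 3 with h | h
    · omega
    · exact Or.inr (Or.inr ⟨(k - 3) / 4, by omega⟩)
  · conv_rhs => rw [y_one, sum_coord_vecCons]
    simp only [coord.eq_1, coord.eq_2, coord.eq_3, coord.eq_4, zero_add]
  · conv_rhs => rw [y_two, sum_coord_vecCons]
    simp only [coord_blockSymbol, coord.eq_1, coord.eq_2, seed, zero_add]
    linear_combination -block_zero_add_block_one f (f (y 1) - f (y 2)) 0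
  · conv_rhs => rw [y_four_mul_add_three, sum_coord_vecCons]
    simp only [coord_blockSymbol, coord.eq_3, add_zero]
    linear_combination -block_two_add_block_three f (seed f n) n
  · conv_rhs => rw [y_four_mul_add_four, sum_coord_vecCons]
    simp only [coord_blockSymbol, coord.eq_4]
    linear_combination -block_two_add_block_three f (seed f n) n -
      block_zero_sub_block_one f (seed f n) n
  · conv_rhs => rw [y_four_mul_add_five, sum_coord_vecCons]
    simp only [coord_blockSymbol, coord.eq_1, seed, zero_add]
    linear_combination -block_zero_add_block_one f (block f (seed f n) n 3) (n + 1)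
  · conv_rhs => rw [y_four_mul_add_six, sum_coord_vecCons]
    simp only [coord_blockSymbol, coord.eq_2, seed, add_zero]
    linear_combination -block_zero_add_block_one f (block f (seed f n) n 3) (n + 1) +
      block_three_sub_block_two f (seed f n) n

end Sinf

/-- the infinite set S = {y₁, y₂, …} is good. -/
theorem stmt_8 : IsGood Sinf := by
  intro f
  refine ⟨fun _ => Sinf.coord f, ?_⟩
  rintro _ ⟨k, hk, rfl⟩
  exact Sinf.eq_sum_coord f hk
end

section
/- For every n ≥ 1, the 4n×4n 0-1 matrix A_{4n}, with rows indexed by the points {y₂, y₃, …, y_{4n}, z} (where z = (α_{4n−1}, x₂, α_{4n−3}, x₄)) and columns indexed by the symbols {α₁, …, α_{4n}}, where the entry is 1 exactly when the symbol occurs as a coordinate of the point, is invertible over ℚ. -/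
open scoped BigOperators

lemma y_spec (k : ℕ) (hk : 3 ≤ k) :
    y k = if k % 4 = 1 then ![0, k+2, k+3, k+4]
      else if k % 4 = 2 then ![k, 1, k+2, k+3]
      else if k % 4 = 3 then ![k+3, k+4, 2, k+2]
      else ![k+2, k+3, k, 3] := by
  have h1 : k ≠ 1 := by omega
  have h2 : k ≠ 2 := by omega
  rcases (show k % 4 = 0 ∨ k % 4 = 1 ∨ k % 4 = 2 ∨ k % 4 = 3 by omega) with h | h | h | h <;>
    · simp only [y, h1, h2, if_false, h]
      have hk2 : k % 4 = 2 → 6 ≤ k := by omega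
      ext i
      fin_cases i <;> simp [α] <;> omega

lemma sum3 {N : ℕ} (v : Fin N → ℚ) (a b c : Fin N) (hab : a ≠ b) (hac : a ≠ c) (hbc : b ≠ c) :
    (∑ j, (if j = a ∨ j = b ∨ j = c then (1:ℚ) else 0) * v j) = v a + v b + v c := by
  have h : ∀ j : Fin N, (if j = a ∨ j = b ∨ j = c then (1:ℚ) else 0) * v j
      = (if j = a then v j else 0) + (if j = b then v j else 0) + (if j = c then v j else 0) := by
    intro j
    by_cases h1 : j = a <;> by_cases h2 : j = b <;> by_cases h3 : j = c <;> simp_all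
  simp_rw [h, Finset.sum_add_distrib]
  simp

lemma sum2 {N : ℕ} (v : Fin N → ℚ) (a b : Fin N) (hab : a ≠ b) :
    (∑ j, (if j = a ∨ j = b then (1:ℚ) else 0) * v j) = v a + v b := by
  have h : ∀ j : Fin N, (if j = a ∨ j = b then (1:ℚ) else 0) * v j
      = (if j = a then v j else 0) + (if j = b then v j else 0) := by
    intro j
    by_cases h1 : j = a <;> by_cases h2 : j = b <;> simp_all
  simp_rw [h, Finset.sum_add_distrib]
  simp

lemma A_apply_eq (n : ℕ) (i j : Fin (4*n)) (P : Prop) [Decidable P]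
    (h : (∃ k, (if (i:ℕ) = 4*n-1 then z n else y ((i:ℕ)+2)) k = (j:ℕ)+4) ↔ P) :
    A n i j = if P then 1 else 0 := by
  simp only [A, Matrix.of_apply]
  exact if_congr h rfl rfl

lemma rowA0 (n : ℕ) (hn : 1 ≤ n) (j : Fin (4*n)) :
    A n ⟨0, by omega⟩ j =
      if (j = (⟨0, by omega⟩ : Fin (4*n)) ∨ j = ⟨1, by omega⟩) then 1 else 0 := by
  apply A_apply_eq
  have hne : (0:ℕ) ≠ 4*n-1 := by omega
  simp only [if_neg hne]
  rw [show (0:ℕ)+2 = 2 by rfl]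
  simp only [y, if_neg (by norm_num : (2:ℕ) ≠ 1), if_pos rfl]
  simp [Fin.exists_fin_succ, Fin.ext_iff, α]

lemma rowAodd (n i : ℕ) (hn : 1 ≤ n) (hodd : i % 2 = 1) (h1 : 1 ≤ i) (h2 : i + 2 ≤ 4*n-1)
    (j : Fin (4*n)) :
    A n ⟨i, by omega⟩ j =
      if (j = (⟨i, by omega⟩ : Fin (4*n)) ∨ j = ⟨i+1, by omega⟩ ∨ j = ⟨i+2, by omega⟩)
      then 1 else 0 := by
  apply A_apply_eq
  have hne : (i:ℕ) ≠ 4*n-1 := by omega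
  simp only [if_neg hne]
  rw [y_spec (i+2) (by omega)]
  rcases (show (i+2)%4 = 1 ∨ (i+2)%4 = 3 by omega) with h | h <;>
    · simp [h, Fin.exists_fin_succ, Fin.ext_iff]
      omega

lemma rowAeven (n i : ℕ) (hn : 1 ≤ n) (heven : i % 2 = 0) (h1 : 2 ≤ i) (h2 : i ≤ 4*n-2)
    (j : Fin (4*n)) :
    A n ⟨i, by omega⟩ j =
      if (j = (⟨i-2, by omega⟩ : Fin (4*n)) ∨ j = ⟨i, by omega⟩ ∨ j = ⟨i+1, by omega⟩)
      then 1 else 0 := by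
  apply A_apply_eq
  have hne : (i:ℕ) ≠ 4*n-1 := by omega
  simp only [if_neg hne]
  rw [y_spec (i+2) (by omega)]
  rcases (show (i+2)%4 = 0 ∨ (i+2)%4 = 2 by omega) with h | h <;>
    · have h6 : (i+2)%4 = 2 → 6 ≤ i+2 := by omega
      simp [h, Fin.exists_fin_succ, Fin.ext_iff]
      omega

lemma rowAz (n : ℕ) (hn : 1 ≤ n) (j : Fin (4*n)) :
    A n ⟨4*n-1, by omega⟩ j =
      if (j = (⟨4*n-4, by omega⟩ : Fin (4*n)) ∨ j = ⟨4*n-2, by omega⟩) then 1 else 0 := by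
  apply A_apply_eq
  simp only [if_pos rfl]
  simp [z, α, Fin.exists_fin_succ, Fin.ext_iff]
  omega


/-- the 4n×4n incidence matrix A_{4n} (rows y₂,…,y_{4n},zₙ,
columns α₁,…,α_{4n}) is invertible over ℚ. -/
theorem stmt_11 (n : ℕ) (hn : 1 ≤ n) : IsUnit (A n) := by
  rw [Matrix.isUnit_iff_isUnit_det, isUnit_iff_ne_zero]
  intro hdet
  obtain ⟨v, hv0, hv⟩ := Matrix.exists_mulVec_eq_zero_iff.mpr hdet
  apply hv0
  set w : ℕ → ℚ := fun j => if h : j < 4*n then v ⟨j, h⟩ else 0 with hwdef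
  have hw : ∀ (j : ℕ) (hj : j < 4*n), w j = v ⟨j, hj⟩ := fun j hj => dif_pos hj
  have hrow : ∀ i : Fin (4*n), (∑ j, A n i j * v j) = 0 := by
    intro i
    have h := congrFun hv i
    simpa [Matrix.mulVec, dotProduct] using h
  -- equation for row 0
  have E0 : w 0 + w 1 = 0 := by
    have hr := hrow ⟨0, by omega⟩
    simp_rw [rowA0 n hn] at hr
    rw [sum2 v _ _ (by simp only [ne_eq, Fin.mk.injEq]; omega)] at hr
    rw [hw 0 (by omega), hw 1 (by omega)]
    exact hr
  -- odd rows
  have Eodd : ∀ i : ℕ, i % 2 = 1 → 1 ≤ i → i + 2 ≤ 4*n-1 →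
      w i + w (i+1) + w (i+2) = 0 := by
    intro i hodd h1 h2
    have hr := hrow ⟨i, by omega⟩
    simp_rw [rowAodd n i hn hodd h1 h2] at hr
    rw [sum3 v _ _ _ (by simp only [ne_eq, Fin.mk.injEq]; omega)
      (by simp only [ne_eq, Fin.mk.injEq]; omega)
      (by simp only [ne_eq, Fin.mk.injEq]; omega)] at hr
    rw [hw i (by omega), hw (i+1) (by omega), hw (i+2) (by omega)]
    exact hr
  -- even rows
  have Eeven : ∀ i : ℕ, i % 2 = 0 → 2 ≤ i → i ≤ 4*n-2 →
      w (i-2) + w i + w (i+1) = 0 := by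
    intro i heven h1 h2
    have hr := hrow ⟨i, by omega⟩
    simp_rw [rowAeven n i hn heven h1 h2] at hr
    rw [sum3 v _ _ _ (by simp only [ne_eq, Fin.mk.injEq]; omega)
      (by simp only [ne_eq, Fin.mk.injEq]; omega)
      (by simp only [ne_eq, Fin.mk.injEq]; omega)] at hr
    rw [hw (i-2) (by omega), hw i (by omega), hw (i+1) (by omega)]
    exact hr
  -- last row
  have Ez : w (4*n-4) + w (4*n-2) = 0 := by
    have hr := hrow ⟨4*n-1, by omega⟩
    simp_rw [rowAz n hn] at hr
    rw [sum2 v _ _ (by simp only [ne_eq, Fin.mk.injEq]; omega)] at hr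
    rw [hw (4*n-4) (by omega), hw (4*n-2) (by omega)]
    exact hr
  -- pairing: w j = w (j+1) for even j ≤ 4*n-4
  have hpair : ∀ j : ℕ, j % 2 = 0 → j ≤ 4*n-4 → w j = w (j+1) := by
    intro j hj hjle
    have h1 := Eodd (j+1) (by omega) (by omega) (by omega)
    have h2 := Eeven (j+2) (by omega) (by omega) (by omega)
    have e : j + 2 - 2 = j := by omega
    rw [e] at h2
    have e1 : j + 1 + 1 = j + 2 := by omega
    have e2 : j + 1 + 2 = j + 3 := by omega
    have e3 : j + 2 + 1 = j + 3 := by omega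
    rw [e1, e2] at h1
    rw [e3] at h2
    linarith
  -- main induction
  have hzero : ∀ t : ℕ, t ≤ 2*n-2 → w (2*t) = 0 ∧ w (2*t+1) = 0 := by
    intro t
    induction t with
    | zero =>
      intro _
      have hp := hpair 0 (by omega) (by omega)
      simp only [Nat.mul_zero] at *
      constructor <;> linarith [E0]
    | succ t ih =>
      intro ht
      obtain ⟨_, h1⟩ := ih (by omega)
      have ho := Eodd (2*t+1) (by omega) (by omega) (by omega)
      have hp := hpair (2*t+2) (by omega) (by omega)
      have e1 : 2*t+1+1 = 2*(t+1) := by omega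
      have e2 : 2*t+1+2 = 2*(t+1)+1 := by omega
      have e3 : 2*t+2 = 2*(t+1) := by omega
      rw [e1, e2] at ho
      rw [e3] at hp
      constructor <;> linarith
  have hlow : ∀ j : ℕ, j ≤ 4*n-3 → w j = 0 := by
    intro j hj
    rcases Nat.even_or_odd j with ⟨t, ht⟩ | ⟨t, ht⟩
    · have := hzero t (by omega)
      rw [show j = 2*t by omega]
      exact this.1
    · have := hzero t (by omega)
      rw [show j = 2*t+1 by omega]
      exact this.2
  have h2 : w (4*n-2) = 0 := by
    have := hlow (4*n-4) (by omega)
    linarith [Ez]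
  have h3 : w (4*n-1) = 0 := by
    have ho := Eodd (4*n-3) (by omega) (by omega) (by omega)
    rw [show 4*n-3+1 = 4*n-2 by omega, show 4*n-3+2 = 4*n-1 by omega] at ho
    have := hlow (4*n-3) (by omega)
    linarith
  funext j
  have hj : (j:ℕ) < 4*n := j.isLt
  have : w (j:ℕ) = 0 := by
    rcases (show (j:ℕ) ≤ 4*n-3 ∨ (j:ℕ) = 4*n-2 ∨ (j:ℕ) = 4*n-1 by omega) with h | h | h
    · exact hlow _ h
    · rw [h]; exact h2
    · rw [h]; exact h3
  rw [hw (j:ℕ) hj] at this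
  simpa using this
end

section
/- For every n ≥ 1, every row of the inverse of the matrix A_{4n} has the sum of absolute values of its entries at most 3. -/
open scoped BigOperators

/-!
Row `i < 4n - 1` of `A_{4n}` is the indicator of the columns `{0, 1}` (`i = 0`), `{i, i+1, i+2}`
(`i` odd) or `{i-2, i, i+1}` (`i` even), so the rows `b_i` of the inverse solve a three-term
recursion. Away from the last two rows it is solved by
`b_{2m+1} = (e_{2m+1} - b_{2m-1} + e_{2m+3} - e_{2m+4}) / 2` and
`b_{2m} = b_{2m+1} - e_{2m+1} + e_{2m+2}`. The top entries of `b_{2m+1}` at `2m+1, 2m+2` are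
`1/2, -1/2`, so subtracting `e_{2m+1}` or adding `e_{2m+2}` only flips their signs: hence
`‖b_{2m}‖₁ = ‖b_{2m+1}‖₁ ≤ (‖b_{2m-1}‖₁ + 2) / 2 ≤ 2`. The row `z` only changes the last two rows,
to `e_{4n-1} - b_{4n-4}` and `e_{4n-2} - e_{4n-1}`, whose `ℓ¹`-norms are at most `3` and `2`.
-/

open Finset

local notation:max "𝐞" c:max => (Pi.single c (1 : ℚ) : ℕ → ℚ)

-- `oddRow m` and `evenRow m` are the rows `b_{2m+1}` and `b_{2m}` above.
def oddRow : ℕ → ℕ → ℚ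
  | 0 => (2 : ℚ)⁻¹ • (𝐞 0 + 𝐞 1 - 𝐞 2)
  | m + 1 => (2 : ℚ)⁻¹ • (𝐞 (2 * m + 1) - oddRow m + 𝐞 (2 * m + 3) - 𝐞 (2 * m + 4))

def evenRow (m : ℕ) : ℕ → ℚ := oddRow m - 𝐞 (2 * m + 1) + 𝐞 (2 * m + 2)

lemma oddRow_eq_zero_of_lt {m j : ℕ} (h : 2 * m + 2 < j) : oddRow m j = 0 := by
  induction m with
  | zero => simp [oddRow, show j ≠ 0 by omega, show j ≠ 1 by omega, show j ≠ 2 by omega]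
  | succ m ih =>
    simp [oddRow, ih (by omega), show j ≠ 2 * m + 1 by omega, show j ≠ 2 * m + 3 by omega,
      show j ≠ 2 * m + 4 by omega]

lemma oddRow_apply_top (m : ℕ) :
    oddRow m (2 * m + 1) = 1 / 2 ∧ oddRow m (2 * m + 2) = -1 / 2 := by
  cases m with
  | zero => norm_num [oddRow]
  | succ m =>
    rw [show 2 * (m + 1) + 1 = 2 * m + 3 by ring, show 2 * (m + 1) + 2 = 2 * m + 4 by ring]
    simp [oddRow, oddRow_eq_zero_of_lt (show 2 * m + 2 < 2 * m + 3 by omega),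
      oddRow_eq_zero_of_lt (show 2 * m + 2 < 2 * m + 4 by omega)]
    norm_num

lemma abs_single_sub_oddRow (m j : ℕ) : |(𝐞 (2 * m + 1) - oddRow m) j| = |oddRow m j| := by
  rcases eq_or_ne j (2 * m + 1) with rfl | h
  · rw [Pi.sub_apply, (oddRow_apply_top m).1]; norm_num
  · simp [h]

lemma abs_evenRow (m j : ℕ) : |evenRow m j| = |oddRow m j| := by
  obtain ⟨h1, h2⟩ := oddRow_apply_top m
  rcases eq_or_ne j (2 * m + 1) with rfl | h
  · simp [evenRow, h1]; norm_num
  rcases eq_or_ne j (2 * m + 2) with rfl | h'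
  · simp [evenRow, h2]; norm_num
  · simp [evenRow, h, h']

lemma sum_abs_single_le (s : Finset ℕ) (c : ℕ) : ∑ j ∈ s, |𝐞 c j| ≤ 1 := by
  simp only [Pi.single_apply, apply_ite, abs_one, abs_zero, sum_ite_eq']
  split_ifs <;> norm_num

lemma sum_abs_oddRow_le (s : Finset ℕ) (m : ℕ) : ∑ j ∈ s, |oddRow m j| ≤ 2 := by
  induction m with
  | zero =>
    have h0 := sum_abs_single_le s 0
    have h1 := sum_abs_single_le s 1
    have h2 := sum_abs_single_le s 2
    calc ∑ j ∈ s, |oddRow 0 j|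
        ≤ ∑ j ∈ s, (|𝐞 0 j| + |𝐞 1 j| + |𝐞 2 j|) / 2 := by
          gcongr with j
          simp only [oddRow, Pi.smul_apply, Pi.add_apply, Pi.sub_apply, smul_eq_mul]
          have := abs_sub (𝐞 0 j + 𝐞 1 j) (𝐞 2 j)
          have := abs_add_le (𝐞 0 j) (𝐞 1 j)
          rw [abs_mul, abs_of_pos (by norm_num : (0 : ℚ) < 2⁻¹)]
          linarith
      _ ≤ 2 := by rw [← sum_div, sum_add_distrib, sum_add_distrib]; linarith
  | succ m ih =>
    have h3 := sum_abs_single_le s (2 * m + 3)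
    have h4 := sum_abs_single_le s (2 * m + 4)
    calc ∑ j ∈ s, |oddRow (m + 1) j|
        ≤ ∑ j ∈ s, (|oddRow m j| + |𝐞 (2 * m + 3) j| + |𝐞 (2 * m + 4) j|) / 2 := by
          gcongr with j
          rw [← abs_single_sub_oddRow m j]
          simp only [oddRow, Pi.smul_apply, Pi.add_apply, Pi.sub_apply, smul_eq_mul]
          have := abs_sub (𝐞 (2 * m + 1) j - oddRow m j + 𝐞 (2 * m + 3) j) (𝐞 (2 * m + 4) j)
          have := abs_add_le (𝐞 (2 * m + 1) j - oddRow m j) (𝐞 (2 * m + 3) j)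
          rw [abs_mul, abs_of_pos (by norm_num : (0 : ℚ) < 2⁻¹)]
          linarith
      _ ≤ 2 := by rw [← sum_div, sum_add_distrib, sum_add_distrib]; linarith

-- Row `i` of `A_{4n}` is the point `y_{i+2}` (or `z`), column `j` the symbol `α_{j+1}`.
def yCols (i : ℕ) : Finset ℕ :=
  if i = 0 then {0, 1} else if i % 2 = 1 then {i, i + 1, i + 2} else {i - 2, i, i + 1}

-- The rows of the inverse of the infinite incidence matrix with rows `y₂, y₃, …`.
def baseRow (i : ℕ) : ℕ → ℚ := if i % 2 = 0 then evenRow (i / 2) else oddRow (i / 2)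

lemma baseRow_two_mul (m : ℕ) : baseRow (2 * m) = evenRow m := by
  simp [baseRow]

lemma baseRow_two_mul_add_one (m : ℕ) : baseRow (2 * m + 1) = oddRow m := by
  simp [baseRow, Nat.add_mod, Nat.add_div]

lemma sum_baseRow_yCols (i : ℕ) : ∑ k ∈ yCols i, baseRow k = 𝐞 i := by
  obtain ⟨m, rfl | rfl⟩ := Nat.even_or_odd' i
  · cases m with
    | zero =>
      have h := baseRow_two_mul_add_one 0
      simp only [yCols, mul_zero, zero_add, if_true] at h ⊢
      rw [sum_pair (by norm_num), h, show baseRow 0 = evenRow 0 from baseRow_two_mul 0]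
      simp only [evenRow, oddRow]
      module
    | succ m =>
      have hcols : yCols (2 * (m + 1)) = {2 * m, 2 * (m + 1), 2 * (m + 1) + 1} := by
        rw [yCols, if_neg (by omega), if_neg (by omega), show 2 * (m + 1) - 2 = 2 * m by omega]
      rw [hcols, sum_insert (by simp; omega), sum_pair (by omega), baseRow_two_mul,
        baseRow_two_mul, baseRow_two_mul_add_one]
      simp only [evenRow, oddRow]
      module
  · have hcols : yCols (2 * m + 1) = {2 * m + 1, 2 * (m + 1), 2 * (m + 1) + 1} := by
      rw [yCols, if_neg (by omega), if_pos (by omega)]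
      ring_nf
    rw [hcols, sum_insert (by simp; omega), sum_pair (by omega), baseRow_two_mul,
      baseRow_two_mul_add_one, baseRow_two_mul_add_one]
    simp only [evenRow, oddRow]
    module

lemma exists_y_eq_iff (i j : ℕ) : (∃ c, y (i + 2) c = j + 4) ↔ j ∈ yCols i := by
  rcases Nat.eq_zero_or_pos i with rfl | hi
  · simp [y, yCols, Fin.exists_fin_succ, α]
  have hi1 : i + 2 ≠ 1 := by omega
  have : (i + 2) % 4 = 0 ∨ (i + 2) % 4 = 1 ∨ (i + 2) % 4 = 2 ∨ (i + 2) % 4 = 3 := by omega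
  rcases this with h | h | h | h <;>
  · simp only [y, yCols, Fin.exists_fin_succ, α, h, hi1, hi.ne', if_false]
    split_ifs <;> simp <;> omega

lemma exists_z_eq_iff {n : ℕ} (hn : 0 < n) (j : ℕ) :
    (∃ c, z n c = j + 4) ↔ j ∈ ({4 * n - 4, 4 * n - 2} : Finset ℕ) := by
  simp [z, Fin.exists_fin_succ, α]
  omega

def rowCols (n i : ℕ) : Finset ℕ := if i = 4 * n - 1 then {4 * n - 4, 4 * n - 2} else yCols i

lemma A_apply_eq_ite {n : ℕ} (hn : 0 < n) (i j : Fin (4 * n)) :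
    A n i j = if (j : ℕ) ∈ rowCols n i then 1 else 0 := by
  simp only [A, rowCols, Matrix.of_apply]
  by_cases hi : (i : ℕ) = 4 * n - 1
  · simp only [if_pos hi, exists_z_eq_iff hn]
  · simp only [if_neg hi, exists_y_eq_iff]

lemma rowCols_subset {n i : ℕ} (hi : i < 4 * n) : ∀ k ∈ rowCols n i, k < 4 * n := by
  intro k hk
  simp only [rowCols, yCols] at hk
  split_ifs at hk <;> simp at hk <;> omega

lemma sum_fin_ite_mem_mul {N : ℕ} (s : Finset ℕ) (hs : ∀ k ∈ s, k < N) (f : ℕ → ℚ) :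
    ∑ j : Fin N, (if (j : ℕ) ∈ s then 1 else 0) * f j = ∑ k ∈ s, f k := by
  rw [Fin.sum_univ_eq_sum_range (fun j => (if j ∈ s then 1 else 0) * f j)]
  simp only [ite_mul, one_mul, zero_mul, sum_ite_mem]
  rw [inter_eq_right.mpr fun k hk => mem_range.mpr (hs k hk)]

def invRow (n i : ℕ) : ℕ → ℚ :=
  if i = 4 * n - 1 then 𝐞 (4 * n - 2) - 𝐞 (4 * n - 1)
  else if i = 4 * n - 2 then 𝐞 (4 * n - 1) - baseRow (4 * n - 4)
  else baseRow i

lemma sum_invRow_rowCols {n i : ℕ} (hn : 0 < n) (hi : i < 4 * n) :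
    ∑ k ∈ rowCols n i, invRow n k = 𝐞 i := by
  obtain ⟨m, rfl⟩ := Nat.exists_eq_add_one.mpr hn
  have h1 : 4 * (m + 1) - 1 = 4 * m + 3 := by omega
  have h2 : 4 * (m + 1) - 2 = 4 * m + 2 := by omega
  have h4 : 4 * (m + 1) - 4 = 4 * m := by omega
  have hbase {k : ℕ} (hk : k < 4 * m + 2) : invRow (m + 1) k = baseRow k := by
    rw [invRow, if_neg (by omega), if_neg (by omega)]
  have hb0 : baseRow (4 * m) = evenRow (2 * m) := by
    rw [show 4 * m = 2 * (2 * m) by ring, baseRow_two_mul]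
  have hb1 : baseRow (4 * m + 1) = oddRow (2 * m) := by
    rw [show 4 * m + 1 = 2 * (2 * m) + 1 by ring, baseRow_two_mul_add_one]
  have hpen : invRow (m + 1) (4 * m + 2) = 𝐞 (4 * m + 3) - evenRow (2 * m) := by
    rw [invRow, if_neg (by omega), if_pos h2.symm, h1, h4, hb0]
  have hlast : invRow (m + 1) (4 * m + 3) = 𝐞 (4 * m + 2) - 𝐞 (4 * m + 3) := by
    rw [invRow, if_pos h1.symm, h1, h2]
  have hevenRow : evenRow (2 * m) = oddRow (2 * m) - 𝐞 (4 * m + 1) + 𝐞 (4 * m + 2) := by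
    rw [evenRow, show 2 * (2 * m) + 1 = 4 * m + 1 by ring, show 2 * (2 * m) + 2 = 4 * m + 2 by ring]
  have : i < 4 * m + 1 ∨ i = 4 * m + 1 ∨ i = 4 * m + 2 ∨ i = 4 * m + 3 := by omega
  rcases this with hi | rfl | rfl | rfl
  · rw [rowCols, if_neg (by omega), ← sum_baseRow_yCols]
    refine sum_congr rfl fun k hk => hbase ?_
    simp only [yCols] at hk
    split_ifs at hk <;> simp at hk <;> omega
  · have hcols : rowCols (m + 1) (4 * m + 1) = {4 * m + 1, 4 * m + 2, 4 * m + 3} := by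
      rw [rowCols, if_neg (by omega), yCols, if_neg (by omega), if_pos (by omega)]
    rw [hcols, sum_insert (by simp), sum_pair (by omega), hbase (by omega), hpen, hlast, hb1,
      hevenRow]
    abel
  · have hcols : rowCols (m + 1) (4 * m + 2) = {4 * m, 4 * m + 2, 4 * m + 3} := by
      rw [rowCols, if_neg (by omega), yCols, if_neg (by omega), if_neg (by omega),
        show 4 * m + 2 - 2 = 4 * m by omega]
    rw [hcols, sum_insert (by simp), sum_pair (by omega), hbase (by omega), hpen, hlast, hb0]
    abel
  · have hcols : rowCols (m + 1) (4 * m + 3) = {4 * m, 4 * m + 2} := by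
      rw [rowCols, if_pos h1.symm, h2, h4]
    rw [hcols, sum_pair (by omega), hbase (by omega), hpen, hb0]
    abel

lemma A_mul_invRow {n : ℕ} (hn : 0 < n) :
    A n * Matrix.of (fun i j : Fin (4 * n) => invRow n i j) = 1 := by
  ext i j
  rw [Matrix.mul_apply]
  simp only [A_apply_eq_ite hn, Matrix.of_apply]
  rw [sum_fin_ite_mem_mul _ (rowCols_subset i.isLt) (fun k => invRow n k j), ← Finset.sum_apply,
    sum_invRow_rowCols hn i.isLt, Pi.single_apply, Matrix.one_apply]
  simp [Fin.ext_iff, eq_comm]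

lemma sum_abs_baseRow_le (i : ℕ) (s : Finset ℕ) : ∑ j ∈ s, |baseRow i j| ≤ 2 := by
  unfold baseRow
  split_ifs
  · simpa only [abs_evenRow] using sum_abs_oddRow_le s (i / 2)
  · exact sum_abs_oddRow_le s (i / 2)

lemma sum_abs_sub_le (s : Finset ℕ) (f g : ℕ → ℚ) :
    ∑ j ∈ s, |(f - g) j| ≤ ∑ j ∈ s, |f j| + ∑ j ∈ s, |g j| :=
  (sum_le_sum fun j _ => abs_sub (f j) (g j)).trans_eq sum_add_distrib

lemma sum_abs_invRow_le (n i : ℕ) (s : Finset ℕ) : ∑ j ∈ s, |invRow n i j| ≤ 3 := by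
  unfold invRow
  split_ifs
  · linarith [sum_abs_sub_le s (𝐞 (4 * n - 2)) (𝐞 (4 * n - 1)), sum_abs_single_le s (4 * n - 2),
      sum_abs_single_le s (4 * n - 1)]
  · linarith [sum_abs_sub_le s (𝐞 (4 * n - 1)) (baseRow (4 * n - 4)),
      sum_abs_single_le s (4 * n - 1), sum_abs_baseRow_le (4 * n - 4) s]
  · linarith [sum_abs_baseRow_le i s]

theorem stmt_12_general (n : ℕ) :
    ∀ i : Fin (4 * n), ∑ j, |(A n)⁻¹ i j| ≤ 3 := by
  intro i
  have hn : 0 < n := by have := i.isLt; omega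
  rw [Matrix.inv_eq_right_inv (A_mul_invRow hn)]
  simpa [Fin.sum_univ_eq_sum_range (fun j => |invRow n i j|)] using
    sum_abs_invRow_le n i (range (4 * n))

/-- every absolute row sum of the inverse of A_{4n} is at most 3. -/
theorem stmt_12 (n : ℕ) (hn : 1 ≤ n) :
    ∀ i : Fin (4 * n), ∑ j, |(A n)⁻¹ i j| ≤ 3 :=
  stmt_12_general n
end
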